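/- arXiv:2307.08172 — 4 statements merged into one kernel-verified Lean document; each statement's English description precedes it below -/
import Mathlib

section
/- Three-dimensional Euclidean space can be decomposed as the disjoint union of circles of radius 1: there is a family 𝒞 of pairwise disjoint subsets of ℝ³ whose union is all of ℝ³, such that each C ∈ 𝒞 is a circle of radius 1, i.e., there exist a point c ∈ ℝ³ and a two-dimensional affine subspace P of ℝ³ with c ∈ P such that C = {x ∈ P | dist(x, c) = 1}. -/
/-- A unit circle in `ℝ³`: the set of points of a plane (two-dimensional affine
subspace) at distance 1 from a center lying in that plane. -/
def IsUnitCircle (C : Set (EuclideanSpace ℝ (Fin 3))) : Prop :=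
  ∃ (P : AffineSubspace ℝ (EuclideanSpace ℝ (Fin 3))) (c : EuclideanSpace ℝ (Fin 3)),
    Module.finrank ℝ P.direction = 2 ∧ c ∈ P ∧ C = {x | x ∈ P ∧ dist x c = 1}


/-!
Well-order `ℝ³` so that every initial segment has fewer than `𝔠` points, and cover the points
greedily. When the current point `p` is not yet covered, fewer than `𝔠` circles have been
chosen. Some plane `E` through `p` differs from all of their planes, so it meets each of them in
at most two points, and fewer than `𝔠` points of `E` are covered. The unit circles of `E` through
`p` are parametrized by their centers, which run over the unit circle of `E` about `p`, and each
covered point `q ≠ p` of `E` lies on at most two of them; so one of them misses all earlier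
circles.
-/

open Cardinal Module Set

universe u

local notation "ℝ³" => EuclideanSpace ℝ (Fin 3)

section GreedyCover

variable {ι α : Type u} [LinearOrder ι] [WellFoundedLT ι] {Good : Set α → Prop} {pt : ι → α}

variable (Good pt) in
open Classical in
/-- The junk value `∅` is never taken under the hypotheses of `greedyCover_spec`. -/
noncomputable def greedyCover : ι → Set α :=
  wellFounded_lt.fix fun i F =>
    if h : ∃ C, Good C ∧ pt i ∈ C ∧ ∀ j (hj : j < i), F j hj = C ∨ Disjoint (F j hj) C
    then h.choose else ∅

open Classical in
theorem greedyCover_eq (i : ι) :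
    greedyCover Good pt i =
      if h : ∃ C, Good C ∧ pt i ∈ C ∧ ∀ j < i, greedyCover Good pt j = C ∨
        Disjoint (greedyCover Good pt j) C
      then h.choose else ∅ := by
  rw [greedyCover, WellFounded.fix_eq]

theorem greedyCover_spec {κ : Cardinal.{u}} (hκ : ∀ i : ι, #(Iio i) < κ)
    (hext : ∀ S : Set (Set α), #S < κ → (∀ C ∈ S, Good C) → ∀ p ∉ ⋃₀ S,
      ∃ C, Good C ∧ p ∈ C ∧ ∀ D ∈ S, Disjoint C D) (i : ι) :
    Good (greedyCover Good pt i) ∧ pt i ∈ greedyCover Good pt i ∧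
      ∀ j < i, greedyCover Good pt j = greedyCover Good pt i ∨
        Disjoint (greedyCover Good pt j) (greedyCover Good pt i) := by
  induction i using WellFoundedLT.induction with
  | ind i ih =>
  set F := greedyCover Good pt
  suffices h : ∃ C, Good C ∧ pt i ∈ C ∧ ∀ j < i, F j = C ∨ Disjoint (F j) C by
    rw [show F i = h.choose from (greedyCover_eq i).trans (dif_pos h)]
    exact h.choose_spec
  by_cases hcov : ∃ j < i, pt i ∈ F j
  · obtain ⟨j, hj, hmem⟩ := hcov
    refine ⟨F j, (ih j hj).1, hmem, fun k hk => ?_⟩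
    rcases lt_trichotomy k j with h | rfl | h
    · exact (ih j hj).2.2 k h
    · exact Or.inl rfl
    · exact ((ih k hk).2.2 j h).imp Eq.symm fun h => h.symm
  · push Not at hcov
    obtain ⟨C, hC, hiC, hdisj⟩ := hext (F '' Iio i) (mk_image_le.trans_lt (hκ i))
      (by rintro _ ⟨j, hj, rfl⟩; exact (ih j hj).1)
      (pt i) (by rintro ⟨_, ⟨j, hj, rfl⟩, h⟩; exact hcov j hj h)
    exact ⟨C, hC, hiC, fun j hj => Or.inr (hdisj _ ⟨j, hj, rfl⟩).symm⟩

end GreedyCover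

theorem exists_pairwise_disjoint_sUnion_eq_univ {α : Type u} (Good : Set α → Prop)
    (hext : ∀ S : Set (Set α), #S < #α → (∀ C ∈ S, Good C) → ∀ p ∉ ⋃₀ S,
      ∃ C, Good C ∧ p ∈ C ∧ ∀ D ∈ S, Disjoint C D) :
    ∃ 𝒞 : Set (Set α), 𝒞.Pairwise Disjoint ∧ ⋃₀ 𝒞 = Set.univ ∧ ∀ C ∈ 𝒞, Good C := by
  let e : (#α).ord.ToType ≃ α := (Cardinal.eq.1 (by rw [mk_toType, card_ord])).some
  have spec := greedyCover_spec (Good := Good) (pt := e) (fun i => by simpa using mk_Iio_lt i)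
    hext
  refine ⟨range (greedyCover Good e), ?_, ?_, ?_⟩
  · rintro _ ⟨i, rfl⟩ _ ⟨j, rfl⟩ hne
    rcases lt_trichotomy i j with h | rfl | h
    · exact ((spec j).2.2 i h).resolve_left hne
    · exact absurd rfl hne
    · exact (((spec i).2.2 j h).resolve_left hne.symm).symm
  · refine eq_univ_of_forall fun x => mem_sUnion.2 ⟨_, mem_range_self (e.symm x), ?_⟩
    simpa using (spec (e.symm x)).2.1
  · rintro _ ⟨i, rfl⟩
    exact (spec i).1

theorem exists_apply_notMem_of_mk_lt_continuum {β : Type u} {f : ℝ → β}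
    (hf : Function.Injective f) {s : Set β} (hs : #s < 𝔠) : ∃ t, f t ∉ s := by
  by_contra! h
  have := lift_mk_le_lift_mk_of_injective (f := fun t => (⟨f t, h t⟩ : s))
    fun a b hab => hf (congrArg Subtype.val hab)
  rw [mk_real, lift_continuum, lift_id'] at this
  exact this.not_gt hs

theorem mk_biUnion_lt_continuum {ι α : Type u} {s : Set ι} {A : ι → Set α} (hs : #s < 𝔠)
    (hA : ∀ i ∈ s, (A i).Countable) : #(⋃ i ∈ s, A i) < 𝔠 :=
  (mk_biUnion_le A s).trans_lt <| mul_lt_of_lt aleph0_le_continuum hs <|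
    (ciSup_le' fun i : s => (hA i i.2).le_aleph0).trans_lt aleph0_lt_continuum

theorem mk_euclideanSpace_fin {n : ℕ} (hn : n ≠ 0) : #(EuclideanSpace ℝ (Fin n)) = 𝔠 := by
  rw [mk_congr (WithLp.equiv 2 _), mk_pi, prod_const, mk_real, mk_fin, lift_id, lift_id]
  exact power_nat_eq aleph0_le_continuum (Nat.one_le_iff_ne_zero.2 hn)

theorem Set.finite_of_forall_eq_or_eq {α : Type*} {s : Set α}
    (h : ∀ a ∈ s, ∀ b ∈ s, a ≠ b → ∀ x ∈ s, x = a ∨ x = b) : s.Finite := by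
  by_cases hs : s.Subsingleton
  · exact hs.finite
  · obtain ⟨a, ha, b, hb, hab⟩ := not_subsingleton_iff.1 hs
    exact (toFinite {a, b}).subset fun x hx => h a ha b hb hab x hx

section LinearIndependentPair

variable {K V : Type*} [Field K] [AddCommGroup V] [Module K V] {u v : V}

theorem add_smul_ne_zero_of_linearIndependent (huv : LinearIndependent K ![u, v]) (t : K) :
    u + t • v ≠ 0 := fun h =>
  one_ne_zero (LinearIndependent.pair_iff.1 huv 1 t (by rw [one_smul, h])).1

theorem Submodule.span_singleton_add_smul_injective (huv : LinearIndependent K ![u, v]) :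
    Function.Injective fun t : K => K ∙ (u + t • v) := by
  intro t s (hts : K ∙ (u + t • v) = K ∙ (u + s • v))
  obtain ⟨k, hk⟩ := mem_span_singleton.1 (hts ▸ mem_span_singleton_self (u + s • v) :
    u + s • v ∈ K ∙ (u + t • v))
  have := LinearIndependent.pair_iff.1 huv (k - 1) (k * t - s) (by
    rw [sub_smul, sub_smul, one_smul, mul_smul, sub_add_sub_comm, ← smul_add, hk, sub_self])
  linear_combination this.2 - t * this.1

end LinearIndependentPair

section EuclideanGeometry

variable {V P : Type*} [NormedAddCommGroup V] [InnerProductSpace ℝ V] [MetricSpace P]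
  [NormedAddTorsor V P]

theorem finite_setOf_mem_dist_eq_of_finrank_le_one [FiniteDimensional ℝ V]
    {L : AffineSubspace ℝ P} (hL : finrank ℝ L.direction ≤ 1) (c : P) (r : ℝ) :
    {x | x ∈ L ∧ dist x c = r}.Finite := by
  rcases eq_empty_or_nonempty {x | x ∈ L ∧ dist x c = r} with h | ⟨p, hpL, hpc⟩
  · simp [h]
  obtain ⟨v, hv⟩ := (L.direction.finrank_le_one_iff_isPrincipal.1 hL).principal
  have hLp : L = AffineSubspace.mk' p (ℝ ∙ v) := by rw [← hv, AffineSubspace.mk'_eq hpL]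
  let s : EuclideanGeometry.Sphere P := ⟨c, r⟩
  refine (toFinite {p, s.secondInter p v}).subset fun x ⟨hxL, hxc⟩ => ?_
  rw [hLp] at hxL
  exact (s.eq_or_eq_secondInter_of_mem_mk'_span_singleton_iff_mem hpc hxL).2 hxc

theorem finrank_direction_inf_le_of_ne [FiniteDimensional ℝ V] {n : ℕ}
    {A B : AffineSubspace ℝ P} (hA : finrank ℝ A.direction = n + 1)
    (hB : finrank ℝ B.direction = n + 1) (hAB : A ≠ B) : finrank ℝ (A ⊓ B).direction ≤ n := by
  by_cases hdir : A.direction = B.direction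
  · have hbot : A ⊓ B = ⊥ := by
      by_contra h
      obtain ⟨x, hxA, hxB⟩ := (AffineSubspace.nonempty_iff_ne_bot _).2 h
      exact hAB (AffineSubspace.ext_of_direction_eq hdir ⟨x, hxA, hxB⟩)
    rw [hbot, AffineSubspace.direction_bot, finrank_bot]
    exact n.zero_le
  · have hlt : A.direction ⊓ B.direction < A.direction := inf_le_left.lt_of_ne fun h =>
      hdir (Submodule.eq_of_le_of_finrank_eq (h ▸ inf_le_right) (hA.trans hB.symm))
    have := (Submodule.finrank_mono (AffineSubspace.direction_inf A B)).trans_lt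
      (Submodule.finrank_lt_finrank_of_lt hlt)
    omega

theorem finite_setOf_dist_eq_dist_eq {E : AffineSubspace ℝ P}
    (hE : finrank ℝ E.direction = 2) {c₁ c₂ : P} (hc₁ : c₁ ∈ E) (hc₂ : c₂ ∈ E) (hc : c₁ ≠ c₂)
    (r₁ r₂ : ℝ) : {x | x ∈ E ∧ dist x c₁ = r₁ ∧ dist x c₂ = r₂}.Finite :=
  have : FiniteDimensional ℝ E.direction := Module.finite_of_finrank_eq_succ hE
  finite_of_forall_eq_or_eq fun _ ha _ hb hab _ hx =>
    EuclideanGeometry.eq_of_dist_eq_of_dist_eq_of_mem_of_finrank_eq_two hE hc₁ hc₂ ha.1 hb.1 hx.1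
      hc hab ha.2.1 hb.2.1 hx.2.1 ha.2.2 hb.2.2 hx.2.2

theorem exists_hyperplane_mem_notMem [FiniteDimensional ℝ V] {n : ℕ}
    (hV : finrank ℝ V = n + 1) (hn : 0 < n) (p : P) {𝒜 : Set (AffineSubspace ℝ P)}
    (h𝒜 : #𝒜 < 𝔠) : ∃ E : AffineSubspace ℝ P, finrank ℝ E.direction = n ∧ p ∈ E ∧ E ∉ 𝒜 := by
  have : Fact (finrank ℝ V = n + 1) := ⟨hV⟩
  have : Nontrivial V := Module.nontrivial_of_finrank_pos (R := ℝ) (by omega)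
  obtain ⟨u, hu⟩ := exists_ne (0 : V)
  obtain ⟨v, huv⟩ := exists_linearIndependent_pair_of_one_lt_finrank (by omega : 1 < finrank ℝ V) hu
  let E : ℝ → AffineSubspace ℝ P := fun t => AffineSubspace.mk' p (ℝ ∙ (u + t • v))ᗮ
  have hE : Function.Injective E := fun t s hts =>
    Submodule.span_singleton_add_smul_injective huv <| by
      simpa [E, Submodule.orthogonal_orthogonal] using
        congrArg (fun A : AffineSubspace ℝ P => A.directionᗮ) hts
  obtain ⟨t, ht⟩ := exists_apply_notMem_of_mk_lt_continuum hE h𝒜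
  refine ⟨E t, ?_, AffineSubspace.self_mem_mk' _ _, ht⟩
  rw [AffineSubspace.direction_mk']
  exact Submodule.finrank_orthogonal_span_singleton (add_smul_ne_zero_of_linearIndependent huv t)

theorem exists_mem_dist_eq_notMem {E : AffineSubspace ℝ P}
    (hE : 1 < finrank ℝ E.direction) {p : P} (hp : p ∈ E) {r : ℝ} (hr : 0 < r) {T : Set P}
    (hT : #T < 𝔠) : ∃ c ∈ E, dist c p = r ∧ c ∉ T := by
  have : Nontrivial E.direction := Module.nontrivial_of_finrank_pos (R := ℝ) (by omega)
  obtain ⟨u, hu⟩ := exists_ne (0 : E.direction)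
  obtain ⟨v, huv⟩ := exists_linearIndependent_pair_of_one_lt_finrank hE hu
  have hw : ∀ t : ℝ, u + t • v ≠ 0 := add_smul_ne_zero_of_linearIndependent huv
  let d : ℝ → E.direction := fun t => (r / ‖u + t • v‖) • (u + t • v)
  have hd : Function.Injective d := fun t s hts =>
    Submodule.span_singleton_add_smul_injective huv <| by
      have hunit : ∀ t, IsUnit (r / ‖u + t • v‖) := fun t =>
        (div_pos hr (norm_pos_iff.2 (hw t))).ne'.isUnit
      have := congrArg (fun x => ℝ ∙ x) hts
      simpa only [d, Submodule.span_singleton_smul_eq (hunit _)] using this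
  have hinj : Function.Injective fun t => (d t : V) +ᵥ p := fun t s hts =>
    hd (Subtype.ext (vadd_right_cancel p hts))
  obtain ⟨t, ht⟩ := exists_apply_notMem_of_mk_lt_continuum hinj hT
  refine ⟨_, AffineSubspace.vadd_mem_of_mem_direction (d t).2 hp, ?_, ht⟩
  rw [dist_vadd_left, ← Submodule.coe_norm, norm_smul, Real.norm_of_nonneg (by positivity),
    div_mul_cancel₀ _ (norm_ne_zero_iff.2 (hw t))]

end EuclideanGeometry

theorem exists_isUnitCircle_mem_forall_disjoint {S : Set (Set ℝ³)} (hS : #S < 𝔠)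
    (hcirc : ∀ C ∈ S, IsUnitCircle C) {p : ℝ³} (hp : p ∉ ⋃₀ S) :
    ∃ C, IsUnitCircle C ∧ p ∈ C ∧ ∀ D ∈ S, Disjoint C D := by
  choose! Q c hQ hcQ hC using hcirc
  obtain ⟨E, hE, hpE, hEQ⟩ := exists_hyperplane_mem_notMem (n := 2) (by simp) (by norm_num) p
    (mk_image_le.trans_lt hS : #(Q '' S) < 𝔠)
  -- each circle of `S` lies in a plane other than `E`, so it meets `E` in finitely many points
  have hB : #(⋃ C ∈ S, C ∩ E) < 𝔠 := mk_biUnion_lt_continuum hS fun C hCS => by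
    refine (finite_setOf_mem_dist_eq_of_finrank_le_one (finrank_direction_inf_le_of_ne (hQ C hCS)
      hE fun h => hEQ ⟨C, hCS, h⟩) (c C) 1).countable.mono ?_
    rintro x ⟨hxC, hxE⟩
    rw [hC C hCS] at hxC
    exact ⟨⟨hxC.1, hxE⟩, hxC.2⟩
  -- the centers `o` whose unit circle in `E` through `p` also passes through a covered point
  have hT : #(⋃ q ∈ ⋃ C ∈ S, C ∩ E, {x | x ∈ E ∧ dist x p = 1 ∧ dist x q = 1}) < 𝔠 :=
    mk_biUnion_lt_continuum hB fun q hq => by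
      obtain ⟨C, hCS, hqC, hqE⟩ := mem_iUnion₂.1 hq
      exact (finite_setOf_dist_eq_dist_eq hE hpE hqE
        (fun h => hp ⟨C, hCS, h ▸ hqC⟩) 1 1).countable
  obtain ⟨o, hoE, hop, hoT⟩ := exists_mem_dist_eq_notMem (by omega) hpE one_pos hT
  refine ⟨{x | x ∈ E ∧ dist x o = 1}, ⟨E, o, hE, hoE, rfl⟩, ⟨hpE, by rwa [dist_comm]⟩,
    fun D hD => disjoint_left.2 fun x ⟨hxE, hxo⟩ hxD => hoT ?_⟩
  exact mem_iUnion₂.2 ⟨x, mem_iUnion₂.2 ⟨D, hD, hxD, hxE⟩, hoE, hop, by rwa [dist_comm]⟩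

/-- `ℝ³` can be decomposed as a disjoint union of circles of radius 1. -/
theorem r3_disjoint_union_of_unit_circles :
    ∃ 𝒞 : Set (Set (EuclideanSpace ℝ (Fin 3))),
      (∀ C ∈ 𝒞, ∀ D ∈ 𝒞, C ≠ D → Disjoint C D) ∧
      ⋃₀ 𝒞 = Set.univ ∧
      ∀ C ∈ 𝒞, IsUnitCircle C :=
  exists_pairwise_disjoint_sUnion_eq_univ IsUnitCircle fun _ hS =>
    exists_isUnitCircle_mem_forall_disjoint (hS.trans_eq (mk_euclideanSpace_fin three_ne_zero))
end

section
/- Every finite simple graph G on n ≥ 2 vertices contains a homogeneous set of size at least (1/2)·log₂(n). -/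
/-- A finset of vertices of a simple graph is homogeneous if the vertices in it are either
pairwise non-adjacent or pairwise adjacent. -/
def IsHomogeneous {V : Type*} (G : SimpleGraph V) (H : Finset V) : Prop :=
  (∀ a ∈ H, ∀ b ∈ H, a ≠ b → ¬ G.Adj a b) ∨ (∀ a ∈ H, ∀ b ∈ H, a ≠ b → G.Adj a b)

open Finset

lemma ramsey_key {V : Type*} [DecidableEq V] (G : SimpleGraph V) [DecidableRel G.Adj] :
    ∀ (n r b : ℕ), r + b = n → ∀ A : Finset V, 2 ^ n ≤ A.card →
    ∃ H : Finset V, H ⊆ A ∧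
      ((H.card = r + 1 ∧ ∀ a ∈ H, ∀ c ∈ H, a ≠ c → G.Adj a c) ∨
       (H.card = b + 1 ∧ ∀ a ∈ H, ∀ c ∈ H, a ≠ c → ¬ G.Adj a c)) := by
  intro n
  induction n with
  | zero =>
    intro r b hrb A hA
    obtain ⟨a, ha⟩ := Finset.card_pos.mp (by omega : 0 < A.card)
    obtain ⟨hr, hb⟩ : r = 0 ∧ b = 0 := by omega
    exact ⟨{a}, Finset.singleton_subset_iff.mpr ha,
      Or.inl ⟨by simp [hr], by simp⟩⟩
  | succ n ih =>
    intro r b hrb A hA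
    have hApos : 0 < A.card := lt_of_lt_of_le (by positivity) hA
    obtain ⟨v, hv⟩ := Finset.card_pos.mp hApos
    set N := (A.erase v).filter (fun x => G.Adj v x) with hN
    set M := (A.erase v).filter (fun x => ¬ G.Adj v x) with hM
    have hcard : N.card + M.card = A.card - 1 := by
      rw [hN, hM, Finset.card_filter_add_card_filter_not,
        Finset.card_erase_of_mem hv]
    have hbig : 2 ^ n ≤ N.card ∨ 2 ^ n ≤ M.card := by
      by_contra h
      push_neg at h
      have := pow_succ 2 n
      omega
    rcases hbig with hNb | hMb
    · rcases r with _ | r'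
      · exact ⟨{v}, Finset.singleton_subset_iff.mpr hv, Or.inl ⟨by simp, by simp⟩⟩
      · obtain ⟨H, hHN, hH⟩ := ih r' b (by omega) N hNb
        have hHA : H ⊆ A := hHN.trans ((Finset.filter_subset _ _).trans (Finset.erase_subset _ _))
        have hvH : v ∉ H := fun h => Finset.notMem_erase v A
          (Finset.filter_subset _ _ (hHN h))
        rcases hH with ⟨hc, hadj⟩ | ⟨hc, hnadj⟩
        · refine ⟨insert v H, Finset.insert_subset hv hHA, Or.inl ⟨?_, ?_⟩⟩
          · rw [Finset.card_insert_of_notMem hvH, hc]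
          · intro a ha c hc' hac
            have adjv : ∀ x ∈ H, G.Adj v x := fun x hx =>
              (Finset.mem_filter.mp (hHN hx)).2
            by_cases hav : a = v
            · subst hav
              exact adjv c ((Finset.mem_insert.mp hc').resolve_left fun h => hac h.symm)
            · have haH : a ∈ H := (Finset.mem_insert.mp ha).resolve_left hav
              by_cases hcv : c = v
              · subst hcv; exact (adjv a haH).symm
              · exact hadj a haH c ((Finset.mem_insert.mp hc').resolve_left hcv) hac
        · exact ⟨H, hHA, Or.inr ⟨hc, hnadj⟩⟩
    · rcases b with _ | b'
      · exact ⟨{v}, Finset.singleton_subset_iff.mpr hv, Or.inr ⟨by simp, by simp⟩⟩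
      · obtain ⟨H, hHM, hH⟩ := ih r b' (by omega) M hMb
        have hHA : H ⊆ A := hHM.trans ((Finset.filter_subset _ _).trans (Finset.erase_subset _ _))
        have hvH : v ∉ H := fun h => Finset.notMem_erase v A
          (Finset.filter_subset _ _ (hHM h))
        rcases hH with ⟨hc, hadj⟩ | ⟨hc, hnadj⟩
        · exact ⟨H, hHA, Or.inl ⟨hc, hadj⟩⟩
        · refine ⟨insert v H, Finset.insert_subset hv hHA, Or.inr ⟨?_, ?_⟩⟩
          · rw [Finset.card_insert_of_notMem hvH, hc]
          · intro a ha c hc' hac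
            have nadjv : ∀ x ∈ H, ¬ G.Adj v x := fun x hx =>
              (Finset.mem_filter.mp (hHM hx)).2
            by_cases hav : a = v
            · subst hav
              exact nadjv c ((Finset.mem_insert.mp hc').resolve_left fun h => hac h.symm)
            · have haH : a ∈ H := (Finset.mem_insert.mp ha).resolve_left hav
              by_cases hcv : c = v
              · subst hcv; exact fun h => nadjv a haH h.symm
              · exact hnadj a haH c ((Finset.mem_insert.mp hc').resolve_left hcv) hac


/-- Every finite simple graph on `n ≥ 2` vertices contains a homogeneous set of size at least
`(1/2) · log₂ n`. -/
theorem ramsey_log_lower_bound (V : Type*) [Fintype V] (G : SimpleGraph V)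
    (hn : 2 ≤ Fintype.card V) :
    ∃ H : Finset V, IsHomogeneous G H ∧
      (1 / 2 : ℝ) * Real.logb 2 (Fintype.card V) ≤ H.card := by
  classical
  set x : ℝ := Real.logb 2 (Fintype.card V) with hx
  have hcard : (2:ℝ) ≤ (Fintype.card V : ℝ) := by exact_mod_cast hn
  have hx1 : 1 ≤ x := by
    rw [hx, show (1:ℝ) = Real.logb 2 2 by simp]
    exact Real.logb_le_logb_of_le (by norm_num) (by norm_num) hcard
  have hx2 : 0 ≤ x / 2 := by linarith
  set m : ℕ := ⌊x / 2⌋₊ with hm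
  have hmle : (m : ℝ) ≤ x / 2 := Nat.floor_le hx2
  have hpow : 2 ^ (2 * m) ≤ Fintype.card V := by
    have h1 : ((2:ℝ) ^ (2 * m) : ℝ) ≤ (Fintype.card V : ℝ) := by
      have h2 : ((2 * m : ℕ) : ℝ) ≤ x := by push_cast; linarith
      calc (2:ℝ) ^ (2 * m) = (2:ℝ) ^ (((2 * m : ℕ) : ℝ)) := by
              rw [Real.rpow_natCast]
        _ ≤ (2:ℝ) ^ x := Real.rpow_le_rpow_of_exponent_le (by norm_num) h2
        _ = (Fintype.card V : ℝ) := Real.rpow_logb (by linarith) (by norm_num) (by linarith)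
    exact_mod_cast h1
  obtain ⟨H, -, hH⟩ := ramsey_key G (2 * m) m m (by ring) Finset.univ
    (by simpa using hpow)
  have hlt : x / 2 < m + 1 := Nat.lt_floor_add_one _
  rcases hH with ⟨hc, hadj⟩ | ⟨hc, hnadj⟩
  · exact ⟨H, Or.inr hadj, by rw [hc]; push_cast; linarith⟩
  · exact ⟨H, Or.inl hnadj, by rw [hc]; push_cast; linarith⟩
end

section
/- Malliaris–Shelah stable Ramsey theorem (simple version): for every natural number k ≥ 1 there exists a constant c = c(k) > 0 such that every finite simple graph G which does not contain a k-half-graph has a homogeneous set of size at least |G|^c, where |G| is the number of vertices of G. -/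
/-- A simple graph contains a `k`-half-graph if there are `2k` pairwise distinct vertices
`a₁, …, a_k, b₁, …, b_k` such that `aᵢ` is adjacent to `bⱼ` iff `i ≤ j`. -/
def ContainsHalfGraph {V : Type*} (G : SimpleGraph V) (k : ℕ) : Prop :=
  ∃ a b : Fin k → V,
    Function.Injective a ∧ Function.Injective b ∧
    (∀ i j, a i ≠ b j) ∧
    (∀ i j : Fin k, G.Adj (a i) (b j) ↔ i ≤ j)

open Classical

noncomputable section StableRamseyAux

namespace StableRamseyAux

variable {V : Type} [Fintype V] (G : SimpleGraph V)

/-- neighbourhood as a finset -/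
def nbr (v : V) : Finset V := Finset.univ.filter (fun x => G.Adj v x)

lemma mem_nbr {v x : V} : x ∈ nbr G v ↔ G.Adj v x := by
  simp [nbr]

/-- the "positive" child -/
def ch1 (A : Finset V) (v : V) : Finset V := A ∩ nbr G v

/-- the "negative" child -/
def ch0 (A : Finset V) (v : V) : Finset V := (A \ nbr G v).erase v

lemma ch1_subset (A : Finset V) (v : V) : ch1 G A v ⊆ A := Finset.inter_subset_left

lemma ch0_subset (A : Finset V) (v : V) : ch0 G A v ⊆ A :=
  (Finset.erase_subset _ _).trans Finset.sdiff_subset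

lemma mem_ch1 {A : Finset V} {v x : V} : x ∈ ch1 G A v ↔ x ∈ A ∧ G.Adj v x := by
  simp [ch1, mem_nbr]

lemma mem_ch0 {A : Finset V} {v x : V} : x ∈ ch0 G A v ↔ x ≠ v ∧ x ∈ A ∧ ¬ G.Adj v x := by
  simp [ch0, mem_nbr, Finset.mem_erase, Finset.mem_sdiff, and_assoc]

lemma ch1_card_lt {A : Finset V} {v : V} (h0 : (ch0 G A v).Nonempty) :
    (ch1 G A v).card < A.card := by
  obtain ⟨x, hx⟩ := h0
  rw [mem_ch0] at hx
  refine Finset.card_lt_card ((Finset.ssubset_iff_of_subset (ch1_subset G A v)).mpr ?_)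
  exact ⟨x, hx.2.1, fun hc => hx.2.2 ((mem_ch1 G).mp hc).2⟩

lemma ch0_card_lt {A : Finset V} {v : V} (h1 : (ch1 G A v).Nonempty) :
    (ch0 G A v).card < A.card := by
  obtain ⟨y, hy⟩ := h1
  rw [mem_ch1] at hy
  refine Finset.card_lt_card ((Finset.ssubset_iff_of_subset (ch0_subset G A v)).mpr ?_)
  exact ⟨y, hy.1, fun hc => ((mem_ch0 G).mp hc).2.2 hy.2⟩

/-- internal splitting rank -/
def rk (A : Finset V) : ℕ :=
  if A = ∅ then 0
  else 1 + A.sup (fun v =>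
    if h : (ch1 G A v).Nonempty ∧ (ch0 G A v).Nonempty then
      min (rk (ch1 G A v)) (rk (ch0 G A v))
    else 0)
termination_by A.card
decreasing_by
  · exact ch1_card_lt G h.2
  · exact ch0_card_lt G h.1

lemma rk_spec (A : Finset V) : rk G A =
    if A = ∅ then 0
    else 1 + A.sup (fun v =>
      if h : (ch1 G A v).Nonempty ∧ (ch0 G A v).Nonempty then
        min (rk G (ch1 G A v)) (rk G (ch0 G A v))
      else 0) := by
  rw [rk]

lemma rk_pos {A : Finset V} (h : A.Nonempty) : 1 ≤ rk G A := by
  rw [rk_spec]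
  simp [Finset.nonempty_iff_ne_empty.mp h]

/-- if the rank is at least 2, there is a splitter both of whose children have
rank at least `rk A - 1`. -/
lemma rank_split {A : Finset V} (h : 2 ≤ rk G A) :
    ∃ v ∈ A, (ch1 G A v).Nonempty ∧ (ch0 G A v).Nonempty ∧
      rk G A ≤ 1 + rk G (ch1 G A v) ∧ rk G A ≤ 1 + rk G (ch0 G A v) := by
  have hA : A ≠ ∅ := by
    rintro rfl
    rw [rk_spec] at h; simp at h
  set f := (fun v => if h : (ch1 G A v).Nonempty ∧ (ch0 G A v).Nonempty then
      min (rk G (ch1 G A v)) (rk G (ch0 G A v)) else 0) with hf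
  have hEq : rk G A = 1 + A.sup f := by rw [rk_spec, if_neg hA]
  obtain ⟨v, hv, hsup⟩ := Finset.exists_mem_eq_sup A (Finset.nonempty_iff_ne_empty.mpr hA) f
  by_cases hcond : (ch1 G A v).Nonempty ∧ (ch0 G A v).Nonempty
  · have hfv : f v = min (rk G (ch1 G A v)) (rk G (ch0 G A v)) := dif_pos hcond
    refine ⟨v, hv, hcond.1, hcond.2, ?_, ?_⟩
    · rw [hEq, hsup, hfv]
      exact Nat.add_le_add_left (min_le_left _ _) 1
    · rw [hEq, hsup, hfv]
      exact Nat.add_le_add_left (min_le_right _ _) 1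
  · have hfv : f v = 0 := dif_neg hcond
    rw [hEq, hsup, hfv] at h
    simp at h

/-- every splitter gives a lower bound on rank -/
lemma rank_lower {A : Finset V} {v : V} (hv : v ∈ A)
    (h1 : (ch1 G A v).Nonempty) (h0 : (ch0 G A v).Nonempty) :
    1 + min (rk G (ch1 G A v)) (rk G (ch0 G A v)) ≤ rk G A := by
  have hA : A ≠ ∅ := by
    rintro rfl; exact absurd hv (by simp)
  set f := (fun v => if h : (ch1 G A v).Nonempty ∧ (ch0 G A v).Nonempty then
      min (rk G (ch1 G A v)) (rk G (ch0 G A v)) else 0) with hf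
  have hEq : rk G A = 1 + A.sup f := by rw [rk_spec, if_neg hA]
  have hle := Finset.le_sup (f := f) hv
  have hfv : f v = min (rk G (ch1 G A v)) (rk G (ch0 G A v)) := dif_pos ⟨h1, h0⟩
  rw [hfv] at hle
  omega


/-- Core lemma: from high rank we extract a "ladder" (half-graph) of length `t`,
together with a reserve set `Q'` of still-high rank, all of whose elements are
adjacent to all ladder points and non-adjacent to (and distinct from) all ladder
witnesses. -/
lemma ladder_aux : ∀ (t : ℕ) (Q : Finset V), 2*t + 1 ≤ rk G Q →
    ∃ (p w : Fin t → V) (Q' : Finset V), Q' ⊆ Q ∧ rk G Q ≤ rk G Q' + 2*t ∧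
      (∀ i j, G.Adj (p i) (w j) ↔ i ≤ j) ∧
      (∀ i j, p i ≠ w j) ∧
      (∀ x ∈ Q', (∀ j, ¬ G.Adj x (w j) ∧ x ≠ w j) ∧ (∀ i, G.Adj x (p i))) := by
  intro t
  induction t with
  | zero =>
    intro Q hQ
    exact ⟨(fun i => i.elim0), (fun i => i.elim0), Q, Finset.Subset.refl Q, by omega,
      fun i => i.elim0, fun i => i.elim0, fun x hx => ⟨fun j => j.elim0, fun i => i.elim0⟩⟩
  | succ t ih =>
    intro Q hQ
    obtain ⟨p, w, Q', hQ'sub, hQ'rk, hpat, hne, hinv⟩ := ih Q (by omega)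
    -- rk Q' ≥ 3
    have h3 : 3 ≤ rk G Q' := by omega
    obtain ⟨u1, hu1Q, h11, h10, hr11, hr10⟩ := rank_split G (A := Q') (by omega)
    set Q1 := ch1 G Q' u1 with hQ1
    have hQ1rk : 2 ≤ rk G Q1 := by omega
    obtain ⟨u2, hu2Q1, h21, h20, hr21, hr20⟩ := rank_split G (A := Q1) hQ1rk
    set Q10 := ch0 G Q1 u2 with hQ10
    have hu2Q' : u2 ∈ Q' := ch1_subset G Q' u1 hu2Q1
    have hadj12 : G.Adj u1 u2 := ((mem_ch1 G).mp hu2Q1).2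
    -- new functions
    refine ⟨Fin.snoc p u1, Fin.snoc w u2, Q10, ?_, ?_, ?_, ?_, ?_⟩
    · exact (ch0_subset G Q1 u2).trans ((ch1_subset G Q' u1).trans hQ'sub)
    · omega
    · -- pattern
      intro i j
      induction i using Fin.lastCases with
      | last =>
        induction j using Fin.lastCases with
        | last =>
          simp only [Fin.snoc_last]
          exact iff_of_true hadj12 (le_refl _)
        | cast j =>
          simp only [Fin.snoc_last, Fin.snoc_castSucc]
          exact iff_of_false ((hinv u1 hu1Q).1 j).1 (not_le.mpr (Fin.castSucc_lt_last j))
      | cast i =>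
        induction j using Fin.lastCases with
        | last =>
          simp only [Fin.snoc_last, Fin.snoc_castSucc]
          exact iff_of_true (((hinv u2 hu2Q').2 i).symm) (Fin.le_last _)
        | cast j =>
          simp only [Fin.snoc_castSucc]
          rw [Fin.castSucc_le_castSucc_iff]
          exact hpat i j
    · -- distinctness
      intro i j
      induction i using Fin.lastCases with
      | last =>
        induction j using Fin.lastCases with
        | last =>
          simp only [Fin.snoc_last]
          exact G.ne_of_adj hadj12
        | cast j =>
          simp only [Fin.snoc_last, Fin.snoc_castSucc]
          exact ((hinv u1 hu1Q).1 j).2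
      | cast i =>
        induction j using Fin.lastCases with
        | last =>
          simp only [Fin.snoc_last, Fin.snoc_castSucc]
          exact (G.ne_of_adj ((hinv u2 hu2Q').2 i)).symm
        | cast j =>
          simp only [Fin.snoc_castSucc]
          exact hne i j
    · -- invariant
      intro x hx
      have hxQ1 : x ∈ Q1 := ch0_subset G Q1 u2 hx
      have hxQ' : x ∈ Q' := ch1_subset G Q' u1 hxQ1
      have hxmem := (mem_ch0 G).mp hx
      constructor
      · intro j
        induction j using Fin.lastCases with
        | last =>
          simp only [Fin.snoc_last]
          exact ⟨fun hadj => hxmem.2.2 hadj.symm, hxmem.1⟩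
        | cast j =>
          simp only [Fin.snoc_castSucc]
          exact (hinv x hxQ').1 j
      · intro i
        induction i using Fin.lastCases with
        | last =>
          simp only [Fin.snoc_last]
          exact (((mem_ch1 G).mp hxQ1).2).symm
        | cast i =>
          simp only [Fin.snoc_castSucc]
          exact (hinv x hxQ').2 i

/-- High rank forces a half-graph. -/
lemma containsHalfGraph_of_rank {k : ℕ} {A : Finset V} (h : 2*k + 1 ≤ rk G A) :
    ContainsHalfGraph G k := by
  obtain ⟨p, w, Q', _, _, hpat, hne, _⟩ := ladder_aux G k A h
  refine ⟨p, w, ?_, ?_, hne, hpat⟩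
  · intro i i' hpp
    by_contra hii
    rcases lt_or_gt_of_ne hii with hlt | hlt
    · have h1 : G.Adj (p i) (w i) := (hpat i i).mpr (le_refl _)
      have h2 : ¬ G.Adj (p i') (w i) := fun hc => absurd ((hpat i' i).mp hc) (not_le.mpr hlt)
      rw [hpp] at h1; exact h2 h1
    · have h1 : G.Adj (p i') (w i') := (hpat i' i').mpr (le_refl _)
      have h2 : ¬ G.Adj (p i) (w i') := fun hc => absurd ((hpat i i').mp hc) (not_le.mpr hlt)
      rw [hpp] at h2; exact h2 h1
  · intro j j' hww
    by_contra hjj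
    rcases lt_or_gt_of_ne hjj with hlt | hlt
    · have h1 : G.Adj (p j') (w j') := (hpat j' j').mpr (le_refl _)
      have h2 : ¬ G.Adj (p j') (w j) := fun hc => absurd ((hpat j' j).mp hc) (not_le.mpr hlt)
      rw [hww] at h2; exact h2 h1
    · have h1 : G.Adj (p j) (w j) := (hpat j j).mpr (le_refl _)
      have h2 : ¬ G.Adj (p j) (w j') := fun hc => absurd ((hpat j j').mp hc) (not_le.mpr hlt)
      rw [← hww] at h2; exact h2 h1


/-- `GOODε A` : every internal vertex has small or co-small neighbourhood in `A`. -/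
def Good (eps : ℝ) (A : Finset V) : Prop :=
  ∀ v ∈ A, ((ch1 G A v).card : ℝ) < eps * A.card + 1 ∨ ((ch0 G A v).card : ℝ) < eps * A.card + 1

/-- extraction of a good subset of polynomially comparable size -/
lemma extract (eps : ℝ) (heps0 : 0 < eps) (heps1 : eps ≤ 1) :
    ∀ (R : ℕ) (A : Finset V), rk G A ≤ R →
    ∃ B ⊆ A, Good G eps B ∧ eps ^ R * A.card ≤ (B.card : ℝ) := by
  intro R
  induction R with
  | zero =>
    intro A hA
    have : A = ∅ := by
      by_contra hne
      have := rk_pos G (Finset.nonempty_iff_ne_empty.mpr hne)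
      omega
    subst this
    exact ⟨∅, Finset.Subset.refl _, fun v hv => absurd hv (by simp), by simp⟩
  | succ R ihR =>
    intro A hA
    by_cases hgood : Good G eps A
    · refine ⟨A, Finset.Subset.refl _, hgood, ?_⟩
      have h1 : eps ^ (R+1) ≤ 1 := pow_le_one₀ (le_of_lt heps0) heps1
      nlinarith [Nat.cast_nonneg (α := ℝ) A.card]
    · rw [Good] at hgood
      push_neg at hgood
      obtain ⟨v, hvA, hc1, hc0⟩ := hgood
      have hAcard : (0:ℝ) ≤ eps * A.card := by positivity
      have h1ne : (ch1 G A v).Nonempty := by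
        rw [← Finset.card_pos]
        by_contra hc; push_neg at hc
        have h0 : ((ch1 G A v).card:ℝ) = 0 := by exact_mod_cast Nat.le_zero.mp hc
        rw [h0] at hc1; linarith
      have h0ne : (ch0 G A v).Nonempty := by
        rw [← Finset.card_pos]
        by_contra hc; push_neg at hc
        have h0 : ((ch0 G A v).card:ℝ) = 0 := by exact_mod_cast Nat.le_zero.mp hc
        rw [h0] at hc0; linarith
      have hmin := rank_lower G hvA h1ne h0ne
      -- choose the child of smaller rank
      rcases le_or_gt (rk G (ch1 G A v)) (rk G (ch0 G A v)) with hle | hle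
      · have hrk : rk G (ch1 G A v) ≤ R := by omega
        obtain ⟨B, hBsub, hBgood, hBcard⟩ := ihR (ch1 G A v) hrk
        refine ⟨B, hBsub.trans (ch1_subset G A v), hBgood, ?_⟩
        have hchild : eps * A.card ≤ ((ch1 G A v).card : ℝ) := by linarith
        calc eps ^ (R+1) * A.card = eps ^ R * (eps * A.card) := by ring
        _ ≤ eps ^ R * ((ch1 G A v).card : ℝ) := by
            apply mul_le_mul_of_nonneg_left hchild (by positivity)
        _ ≤ (B.card : ℝ) := hBcard
      · have hrk : rk G (ch0 G A v) ≤ R := by omega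
        obtain ⟨B, hBsub, hBgood, hBcard⟩ := ihR (ch0 G A v) hrk
        refine ⟨B, hBsub.trans (ch0_subset G A v), hBgood, ?_⟩
        have hchild : eps * A.card ≤ ((ch0 G A v).card : ℝ) := by linarith
        calc eps ^ (R+1) * A.card = eps ^ R * (eps * A.card) := by ring
        _ ≤ eps ^ R * ((ch0 G A v).card : ℝ) := by
            apply mul_le_mul_of_nonneg_left hchild (by positivity)
        _ ≤ (B.card : ℝ) := hBcard

/-- greedy construction of a homogeneous set inside a good set -/
lemma greedy (eps : ℝ) (heps : 0 ≤ eps) (A : Finset V) (hgood : Good G eps A) (T : ℕ)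
    (hT : (T : ℝ) * (eps * A.card + 2) + 1 ≤ (A.card : ℝ) / 2) :
    ∃ S : Finset V, S.card = T ∧ IsHomogeneous G S := by
  set m : ℝ := (A.card : ℝ) with hm
  have hm0 : 0 ≤ m := Nat.cast_nonneg _
  have hbeta : (0:ℝ) ≤ eps * m + 2 := by positivity
  set D : Finset V := A.filter (fun v => ((ch0 G A v).card : ℝ) < eps * m + 1) with hD
  set Sp : Finset V := A.filter (fun v => ((ch1 G A v).card : ℝ) < eps * m + 1) with hSp
  have hsum : m ≤ (Sp.card : ℝ) + (D.card : ℝ) := by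
    have hcover : A ⊆ Sp ∪ D := by
      intro v hv
      rcases hgood v hv with h | h
      · exact Finset.mem_union_left _ (Finset.mem_filter.mpr ⟨hv, h⟩)
      · exact Finset.mem_union_right _ (Finset.mem_filter.mpr ⟨hv, h⟩)
    have h1 : A.card ≤ (Sp ∪ D).card := Finset.card_le_card hcover
    have h2 : (Sp ∪ D).card ≤ Sp.card + D.card := Finset.card_union_le _ _
    have h3 : A.card ≤ Sp.card + D.card := le_trans h1 h2
    rw [hm]
    exact_mod_cast h3
  have hmaj : (m / 2 ≤ (D.card : ℝ)) ∨ (m / 2 ≤ (Sp.card : ℝ)) := by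
    by_contra hcon
    push_neg at hcon
    linarith [hcon.1, hcon.2]
  rcases hmaj with hmaj | hmaj
  · -- dense case: build a clique
    have key : ∀ t : ℕ, t ≤ T → ∃ S : Finset V, S.card = t ∧
        (∀ a ∈ S, ∀ b ∈ S, a ≠ b → G.Adj a b) ∧
        m - t * (eps * m + 2) ≤ ((A.filter (fun x => ∀ a ∈ S, G.Adj a x)).card : ℝ) := by
      intro t
      induction t with
      | zero =>
        intro _
        refine ⟨∅, rfl, by simp, ?_⟩
        have he : A.filter (fun x => ∀ a ∈ (∅ : Finset V), G.Adj a x) = A := by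
          apply Finset.filter_true_of_mem; intro x hx a ha; exact absurd ha (by simp)
        rw [he]; simp [hm]
      | succ t iht =>
        intro ht
        obtain ⟨S, hScard, hSadj, hCcard⟩ := iht (by omega)
        set C : Finset V := A.filter (fun x => ∀ a ∈ S, G.Adj a x) with hC
        have hCsubA : C ⊆ A := Finset.filter_subset _ _
        -- find a new vertex in D ∩ C
        have hDC : (0:ℝ) < ((D ∩ C).card : ℝ) := by
          have h1 : ((D ∪ C).card : ℝ) ≤ m := by
            have hu : (D ∪ C).card ≤ A.card :=
              Finset.card_le_card (Finset.union_subset (Finset.filter_subset _ _) hCsubA)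
            rw [hm]
            exact_mod_cast hu
          have h2 : (D.card : ℝ) + (C.card : ℝ) - ((D ∪ C).card : ℝ) ≤ ((D ∩ C).card : ℝ) := by
            have h3 := Finset.card_union_add_card_inter D C
            have h4 : ((D ∪ C).card : ℝ) + ((D ∩ C).card : ℝ) = (D.card : ℝ) + (C.card : ℝ) := by
              exact_mod_cast h3
            linarith
          have htT : (t : ℝ) + 1 ≤ (T : ℝ) := by exact_mod_cast ht
          have ht' : (t : ℝ) * (eps * m + 2) ≤ (T:ℝ) * (eps * m + 2) - (eps * m + 2) := by
            nlinarith
          linarith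
        obtain ⟨a, ha⟩ := Finset.card_pos.mp (by exact_mod_cast hDC)
        have haD : a ∈ D := (Finset.mem_inter.mp ha).1
        have haC : a ∈ C := (Finset.mem_inter.mp ha).2
        have haA : a ∈ A := Finset.filter_subset _ _ haD
        have haadj : ∀ b ∈ S, G.Adj b a := fun b hb => (Finset.mem_filter.mp haC).2 b hb
        have haS : a ∉ S := fun hc => G.irrefl (haadj a hc)
        refine ⟨insert a S, ?_, ?_, ?_⟩
        · rw [Finset.card_insert_of_notMem haS, hScard]
        · intro x hx y hy hxy
          rcases Finset.mem_insert.mp hx with rfl | hxS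
          · rcases Finset.mem_insert.mp hy with rfl | hyS
            · exact absurd rfl hxy
            · exact (haadj y hyS).symm
          · rcases Finset.mem_insert.mp hy with rfl | hyS
            · exact haadj x hxS
            · exact hSadj x hxS y hyS hxy
        · set C' : Finset V := A.filter (fun x => ∀ b ∈ insert a S, G.Adj b x) with hC'
          have hsub : C' ⊆ C := by
            intro x hx
            rw [Finset.mem_filter] at hx ⊢
            exact ⟨hx.1, fun b hb => hx.2 b (Finset.mem_insert_of_mem hb)⟩
          have hdiff : C \ C' ⊆ A \ nbr G a := by
            intro x hx
            rw [Finset.mem_sdiff] at hx ⊢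
            obtain ⟨hxC, hxC'⟩ := hx
            have hxA : x ∈ A := hCsubA hxC
            refine ⟨hxA, fun hmem => hxC' ?_⟩
            rw [Finset.mem_filter]
            refine ⟨hxA, fun b hb => ?_⟩
            rcases Finset.mem_insert.mp hb with rfl | hbS
            · exact (mem_nbr G).mp hmem
            · exact (Finset.mem_filter.mp hxC).2 b hbS
          have hDcond : ((ch0 G A a).card : ℝ) < eps * m + 1 := (Finset.mem_filter.mp haD).2
          have hsd : ((A \ nbr G a).card : ℝ) ≤ ((ch0 G A a).card : ℝ) + 1 := by
            have hss : A \ nbr G a ⊆ insert a (ch0 G A a) := by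
              intro x hx
              rw [Finset.mem_sdiff] at hx
              by_cases hxa : x = a
              · exact Finset.mem_insert.mpr (Or.inl hxa)
              · refine Finset.mem_insert.mpr (Or.inr ?_)
                rw [mem_ch0]
                exact ⟨hxa, hx.1, fun hadj => hx.2 ((mem_nbr G).mpr hadj)⟩
            have h5 : (A \ nbr G a).card ≤ (ch0 G A a).card + 1 :=
              le_trans (Finset.card_le_card hss) (Finset.card_insert_le _ _)
            exact_mod_cast h5
          have hloss : ((C \ C').card : ℝ) ≤ eps * m + 2 := by
            have h6 : (C \ C').card ≤ (A \ nbr G a).card := Finset.card_le_card hdiff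
            have h7 : ((C \ C').card : ℝ) ≤ ((A \ nbr G a).card : ℝ) := by exact_mod_cast h6
            linarith
          have hCC' : (C.card : ℝ) - ((C \ C').card : ℝ) ≤ (C'.card : ℝ) := by
            have h8 := Finset.card_sdiff_add_card_eq_card hsub
            have h9 : ((C \ C').card : ℝ) + ((C'.card : ℝ)) = (C.card : ℝ) := by
              exact_mod_cast h8
            linarith
          have : m - (t+1) * (eps * m + 2) ≤ (C'.card : ℝ) := by
            have : m - t * (eps*m+2) ≤ (C.card : ℝ) := hCcard
            push_cast
            linarith
          push_cast at this ⊢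
          linarith
    obtain ⟨S, hScard, hSadj, _⟩ := key T (le_refl T)
    exact ⟨S, hScard, Or.inr hSadj⟩
  · -- sparse case: build an independent set
    have key : ∀ t : ℕ, t ≤ T → ∃ S : Finset V, S.card = t ∧
        (∀ a ∈ S, ∀ b ∈ S, a ≠ b → ¬ G.Adj a b) ∧
        m - t * (eps * m + 2) ≤ ((A.filter (fun x => ∀ a ∈ S, ¬ G.Adj a x ∧ a ≠ x)).card : ℝ) := by
      intro t
      induction t with
      | zero =>
        intro _
        refine ⟨∅, rfl, by simp, ?_⟩
        have he : A.filter (fun x => ∀ a ∈ (∅ : Finset V), ¬ G.Adj a x ∧ a ≠ x) = A := by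
          apply Finset.filter_true_of_mem; intro x hx a ha; exact absurd ha (by simp)
        rw [he]; simp [hm]
      | succ t iht =>
        intro ht
        obtain ⟨S, hScard, hSadj, hCcard⟩ := iht (by omega)
        set C : Finset V := A.filter (fun x => ∀ a ∈ S, ¬ G.Adj a x ∧ a ≠ x) with hC
        have hCsubA : C ⊆ A := Finset.filter_subset _ _
        have hDC : (0:ℝ) < ((Sp ∩ C).card : ℝ) := by
          have h1 : ((Sp ∪ C).card : ℝ) ≤ m := by
            have hu : (Sp ∪ C).card ≤ A.card :=
              Finset.card_le_card (Finset.union_subset (Finset.filter_subset _ _) hCsubA)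
            rw [hm]
            exact_mod_cast hu
          have h2 : (Sp.card : ℝ) + (C.card : ℝ) - ((Sp ∪ C).card : ℝ) ≤ ((Sp ∩ C).card : ℝ) := by
            have h3 := Finset.card_union_add_card_inter Sp C
            have h4 : ((Sp ∪ C).card : ℝ) + ((Sp ∩ C).card : ℝ) = (Sp.card : ℝ) + (C.card : ℝ) := by
              exact_mod_cast h3
            linarith
          have htT : (t : ℝ) + 1 ≤ (T : ℝ) := by exact_mod_cast ht
          have ht' : (t : ℝ) * (eps * m + 2) ≤ (T:ℝ) * (eps * m + 2) - (eps * m + 2) := by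
            nlinarith
          linarith
        obtain ⟨a, ha⟩ := Finset.card_pos.mp (by exact_mod_cast hDC)
        have haD : a ∈ Sp := (Finset.mem_inter.mp ha).1
        have haC : a ∈ C := (Finset.mem_inter.mp ha).2
        have haA : a ∈ A := Finset.filter_subset _ _ haD
        have hana : ∀ b ∈ S, ¬ G.Adj b a ∧ b ≠ a := fun b hb => (Finset.mem_filter.mp haC).2 b hb
        have haS : a ∉ S := fun hc => (hana a hc).2 rfl
        refine ⟨insert a S, ?_, ?_, ?_⟩
        · rw [Finset.card_insert_of_notMem haS, hScard]
        · intro x hx y hy hxy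
          rcases Finset.mem_insert.mp hx with rfl | hxS
          · rcases Finset.mem_insert.mp hy with rfl | hyS
            · exact absurd rfl hxy
            · exact fun hadj => (hana y hyS).1 hadj.symm
          · rcases Finset.mem_insert.mp hy with rfl | hyS
            · exact (hana x hxS).1
            · exact hSadj x hxS y hyS hxy
        · set C' : Finset V := A.filter (fun x => ∀ b ∈ insert a S, ¬ G.Adj b x ∧ b ≠ x) with hC'
          have hsub : C' ⊆ C := by
            intro x hx
            rw [Finset.mem_filter] at hx ⊢
            exact ⟨hx.1, fun b hb => hx.2 b (Finset.mem_insert_of_mem hb)⟩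
          have hdiff : C \ C' ⊆ insert a (ch1 G A a) := by
            intro x hx
            rw [Finset.mem_sdiff] at hx
            obtain ⟨hxC, hxC'⟩ := hx
            have hxA : x ∈ A := hCsubA hxC
            by_cases hxa : x = a
            · exact Finset.mem_insert.mpr (Or.inl hxa)
            · refine Finset.mem_insert.mpr (Or.inr ?_)
              rw [mem_ch1]
              refine ⟨hxA, ?_⟩
              by_contra hadj
              apply hxC'
              rw [Finset.mem_filter]
              refine ⟨hxA, fun b hb => ?_⟩
              rcases Finset.mem_insert.mp hb with rfl | hbS
              · exact ⟨hadj, fun hba => hxa hba.symm⟩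
              · exact (Finset.mem_filter.mp hxC).2 b hbS
          have hDcond : ((ch1 G A a).card : ℝ) < eps * m + 1 := (Finset.mem_filter.mp haD).2
          have hloss : ((C \ C').card : ℝ) ≤ eps * m + 2 := by
            have h6 : (C \ C').card ≤ (ch1 G A a).card + 1 :=
              le_trans (Finset.card_le_card hdiff) (Finset.card_insert_le _ _)
            have h7 : ((C \ C').card : ℝ) ≤ ((ch1 G A a).card : ℝ) + 1 := by exact_mod_cast h6
            linarith
          have hCC' : (C.card : ℝ) - ((C \ C').card : ℝ) ≤ (C'.card : ℝ) := by
            have h8 := Finset.card_sdiff_add_card_eq_card hsub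
            have h9 : ((C \ C').card : ℝ) + ((C'.card : ℝ)) = (C.card : ℝ) := by
              exact_mod_cast h8
            linarith
          have : m - (t+1) * (eps * m + 2) ≤ (C'.card : ℝ) := by
            have : m - t * (eps*m+2) ≤ (C.card : ℝ) := hCcard
            push_cast
            linarith
          push_cast at this ⊢
          linarith
    obtain ⟨S, hScard, hSadj, _⟩ := key T (le_refl T)
    exact ⟨S, hScard, Or.inl hSadj⟩

end StableRamseyAux


open StableRamseyAux

/-- Malliaris–Shelah stable Ramsey theorem (simple version): for every `k ≥ 1` there is a
constant `c > 0` such that every finite simple graph with no `k`-half-graph has a homogeneous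
set of size at least `|G|^c`. -/
theorem stable_ramsey (k : ℕ) (hk : 1 ≤ k) :
    ∃ c : ℝ, 0 < c ∧
      ∀ (V : Type) [Fintype V] (G : SimpleGraph V), ¬ ContainsHalfGraph G k →
        ∃ H : Finset V, IsHomogeneous G H ∧
          (Fintype.card V : ℝ) ^ c ≤ H.card := by
  have hKpos : (0:ℝ) < 2*(k:ℝ)+1 := by positivity
  set c : ℝ := 1/(16*(2*(k:ℝ)+1)) with hc
  have hcpos : 0 < c := by rw [hc]; positivity
  refine ⟨c, hcpos, ?_⟩
  intro V _ G hG
  set N : ℝ := (Fintype.card V : ℝ) with hN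
  have hN0 : 0 ≤ N := Nat.cast_nonneg _
  by_cases hsmall : N ^ c ≤ 2
  · by_cases hn1 : Fintype.card V ≤ 1
    · -- tiny graphs: the whole vertex set is homogeneous
      refine ⟨Finset.univ, ?_, ?_⟩
      · left
        intro a ha b hb hab
        exact absurd (Finset.card_le_one.mp (by rw [Finset.card_univ]; exact hn1) a ha b hb) hab
      · rw [Finset.card_univ, ← hN]
        have : Fintype.card V = 0 ∨ Fintype.card V = 1 := by omega
        rcases this with h0 | h1
        · rw [hN, h0]; push_cast
          rw [Real.zero_rpow (ne_of_gt hcpos)]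
        · rw [hN, h1]; push_cast
          rw [Real.one_rpow]
    · -- a pair of vertices is homogeneous
      push_neg at hn1
      obtain ⟨x, y, hxy⟩ := Fintype.exists_pair_of_one_lt_card hn1
      refine ⟨{x, y}, ?_, ?_⟩
      · by_cases hadj : G.Adj x y
        · right
          intro a ha b hb hab
          rcases Finset.mem_insert.mp ha with rfl | ha' <;>
            rcases Finset.mem_insert.mp hb with rfl | hb'
          · exact absurd rfl hab
          · rw [Finset.mem_singleton] at hb'; subst hb'; exact hadj
          · rw [Finset.mem_singleton] at ha'; subst ha'; exact hadj.symm
          · rw [Finset.mem_singleton] at ha' hb'; subst ha'; subst hb'; exact absurd rfl hab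
        · left
          intro a ha b hb hab
          rcases Finset.mem_insert.mp ha with rfl | ha' <;>
            rcases Finset.mem_insert.mp hb with rfl | hb'
          · exact absurd rfl hab
          · rw [Finset.mem_singleton] at hb'; subst hb'; exact hadj
          · rw [Finset.mem_singleton] at ha'; subst ha'
            exact fun hadj' => hadj hadj'.symm
          · rw [Finset.mem_singleton] at ha' hb'; subst ha'; subst hb'; exact absurd rfl hab
      · rw [Finset.card_pair hxy]
        exact_mod_cast hsmall
  · -- main case
    push_neg at hsmall
    have hN1 : 1 < N := by
      by_contra hle
      push_neg at hle
      have := Real.rpow_le_one hN0 hle hcpos.le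
      linarith
    have hNpos : 0 < N := by linarith
    set δ : ℝ := 1/(2*(2*(k:ℝ)+1)) with hδ
    have hδpos : 0 < δ := by rw [hδ]; positivity
    have hδhalf : δ ≤ 1/2 := by
      rw [hδ]
      rw [div_le_div_iff₀ (by positivity) (by norm_num)]
      nlinarith [Nat.cast_nonneg (α := ℝ) k]
    have hNδ : 256 ≤ N ^ δ := by
      have hδ8 : δ = c * 8 := by rw [hδ, hc]; field_simp; ring
      rw [hδ8, Real.rpow_mul hN0]
      calc (256:ℝ) = 2 ^ (8:ℝ) := by
            rw [show (8:ℝ) = ((8:ℕ):ℝ) by norm_num, Real.rpow_natCast]; norm_num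
      _ ≤ (N ^ c) ^ (8:ℝ) := Real.rpow_le_rpow (by norm_num) hsmall.le (by norm_num)
    set eps : ℝ := N ^ (-δ) with heq
    have heps0 : 0 < eps := Real.rpow_pos_of_pos hNpos _
    have hepsle : eps ≤ 1/256 := by
      rw [heq, Real.rpow_neg hN0]
      rw [show (1:ℝ)/256 = (256:ℝ)⁻¹ by norm_num]
      exact inv_anti₀ (by norm_num) hNδ
    have heps1 : eps ≤ 1 := le_trans hepsle (by norm_num)
    -- rank bound
    have hrk : rk G (Finset.univ : Finset V) ≤ 2*k := by
      by_contra hcon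
      push_neg at hcon
      exact hG (containsHalfGraph_of_rank G (A := Finset.univ) (by omega))
    obtain ⟨B, hBsub, hBgood, hBcard⟩ := extract G eps heps0 heps1 (2*k) Finset.univ hrk
    rw [Finset.card_univ, ← hN] at hBcard
    set m : ℝ := (B.card : ℝ) with hm
    have hm0 : 0 ≤ m := Nat.cast_nonneg _
    -- key size estimates
    have e1 : eps ^ (2*k) * N = N ^ (1 - δ * (2*(k:ℝ))) := by
      rw [heq, ← Real.rpow_natCast (N ^ (-δ)) (2*k), ← Real.rpow_mul hN0]
      have ha : N ^ (-δ * ((2*k:ℕ):ℝ)) * N = N ^ (-δ * ((2*k:ℕ):ℝ) + 1) := by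
        rw [Real.rpow_add hNpos, Real.rpow_one]
      rw [ha]
      congr 1
      push_cast
      ring
    have e2 : eps * (eps ^ (2*k) * N) = N ^ ((1:ℝ)/2) := by
      rw [e1, heq, ← Real.rpow_add hNpos]
      congr 1
      rw [hδ]
      field_simp
      try ring
    have hsqrt : 256 ≤ N ^ ((1:ℝ)/2) := by
      calc (256:ℝ) ≤ N ^ δ := hNδ
      _ ≤ N ^ ((1:ℝ)/2) := Real.rpow_le_rpow_of_exponent_le hN1.le hδhalf
    have hK2 : 16 ≤ eps * m := by
      have h1 : eps * (eps ^ (2*k) * N) ≤ eps * m :=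
        mul_le_mul_of_nonneg_left hBcard heps0.le
      rw [e2] at h1
      linarith
    have hK1 : N ^ c * eps ≤ 1/128 := by
      have e3 : N ^ c * eps = N ^ (c - δ) := by
        rw [heq, ← Real.rpow_add hNpos]
        congr 1
        try ring
      have e5 : c - δ = -(δ * (7/8)) := by
        rw [hc, hδ]
        field_simp
        try ring
      have e4 : 128 ≤ N ^ (δ * (7/8)) := by
        rw [Real.rpow_mul hN0]
        calc (128:ℝ) = 256 ^ ((7:ℝ)/8) := by
              rw [show (256:ℝ) = 2 ^ (8:ℝ) by
                rw [show (8:ℝ) = ((8:ℕ):ℝ) by norm_num, Real.rpow_natCast]; norm_num]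
              rw [← Real.rpow_mul (by norm_num : (0:ℝ) ≤ 2)]
              rw [show (8:ℝ) * (7/8) = ((7:ℕ):ℝ) by norm_num]
              rw [Real.rpow_natCast]
              norm_num
        _ ≤ (N ^ δ) ^ ((7:ℝ)/8) := Real.rpow_le_rpow (by norm_num) hNδ (by norm_num)
      rw [e3, e5, Real.rpow_neg hN0]
      rw [show (1:ℝ)/128 = (128:ℝ)⁻¹ by norm_num]
      exact inv_anti₀ (by norm_num) e4
    have hm4096 : 4096 ≤ m := by
      have : eps * m ≤ (1/256) * m := mul_le_mul_of_nonneg_right hepsle hm0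
      linarith
    set T : ℕ := ⌈N ^ c⌉₊ with hT
    have hTub : (T:ℝ) ≤ N ^ c + 1 :=
      le_of_lt (Nat.ceil_lt_add_one (Real.rpow_nonneg hN0 c))
    have hNc0 : 0 ≤ N ^ c := Real.rpow_nonneg hN0 c
    have hmain : (T : ℝ) * (eps * m + 2) + 1 ≤ m / 2 := by
      have hb0 : (0:ℝ) ≤ eps * m + 2 := by positivity
      have h1 : (T:ℝ) * (eps*m+2) ≤ (N^c+1) * (eps*m+2) :=
        mul_le_mul_of_nonneg_right hTub hb0
      have hexp : (N^c+1) * (eps*m+2) = N^c*eps*m + 2*(N^c) + eps*m + 2 := by ring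
      have h2 : N^c*eps*m ≤ m/128 := by
        have := mul_le_mul_of_nonneg_right hK1 hm0
        linarith
      have h3 : N^c ≤ m/2048 := by
        have h3a : 16 * (N^c) ≤ (eps*m) * (N^c) := mul_le_mul_of_nonneg_right hK2 hNc0
        have h3b : (eps*m)*(N^c) = N^c*eps*m := by ring
        linarith
      have h4 : eps*m ≤ m/256 := by
        have := mul_le_mul_of_nonneg_right hepsle hm0
        linarith
      linarith
    obtain ⟨S, hScard, hShom⟩ := greedy G eps heps0.le B hBgood T (by rw [← hm]; exact hmain)
    refine ⟨S, hShom, ?_⟩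
    rw [hScard, hT]
    exact Nat.le_ceil _

end StableRamseyAux
end

section
/- For every infinite cardinal λ there exists a linear order L of cardinality λ which is densely ordered and has no greatest and no least element, such that the set of cuts of L (downward-closed subsets of L) has cardinality strictly greater than λ. -/
/-!
Let `κ` be the least cardinal with `λ < 2 ^ κ`; then `κ ≤ λ` and `2 ^ μ ≤ λ` for every `μ < κ`.
Well-order a set `K` of size `κ` and order `K → Bool` lexicographically. The functions whose
support is bounded in `K` form a set `D` of size at most `∑_{k : K} 2 ^ |Iic k| ≤ κ · λ = λ`,
and `D` is dense in `K → Bool`: below any `g' > g`, truncating `g'` after the first place where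
it exceeds `g` lands in `(g, g']`. Hence the `2 ^ κ > λ` elements of `K → Bool` give pairwise
distinct cuts of `D`. Replacing `D` by `D ×ₗ (A ×ₗ ℚ)` with `|A| = λ` makes the order dense,
without endpoints and of size exactly `λ`, and keeps these cuts distinct.
-/

universe u

open Cardinal Set
open scoped Ordinal

theorem mk_le_mk_setOf_isLowerSet_of_monotone {X L : Type u} [LinearOrder X] [Preorder L]
    {f : L → X} (hf : Monotone f) (hdense : ∀ x y, x < y → ∃ l, x < f l ∧ f l ≤ y) :
    #X ≤ #{s : Set L | IsLowerSet s} := by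
  have hcut : StrictMono fun x => f ⁻¹' Iic x := fun x y hxy => by
    obtain ⟨l, hxl, hly⟩ := hdense x y hxy
    exact (ssubset_iff_of_subset fun l hl => le_trans hl hxy.le).2 ⟨l, hly, hxl.not_ge⟩
  exact mk_le_of_injective (f := fun x => ⟨f ⁻¹' Iic x, (isLowerSet_Iic x).preimage hf⟩)
    fun x y h => hcut.injective (congrArg Subtype.val h)

def boundedSupport (K : Type u) [Preorder K] : Set (Lex (K → Bool)) :=
  {f | BddAbove {k | ofLex f k = true}}

section BoundedSupport

variable {K : Type u} [LinearOrder K]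

theorem boundedSupport_nonempty [Nonempty K] : (boundedSupport K).Nonempty :=
  ⟨toLex fun _ => false, by simp [boundedSupport]⟩

theorem mk_boundedSupport_le_sum : #(boundedSupport K) ≤ sum fun k : K => 2 ^ #(Iic k) := by
  let support : boundedSupport K → ⋃ k : K, 𝒫 Iic k := fun f =>
    ⟨{k | ofLex f.1 k = true}, mem_iUnion.2 (bddAbove_def.1 f.2)⟩
  have hsupport : Function.Injective support := fun f g h => Subtype.ext <| funext fun k => by
    simpa [support] using congrArg (fun s => k ∈ s.1) h
  calc #(boundedSupport K) ≤ #(⋃ k : K, 𝒫 Iic k) := mk_le_of_injective hsupport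
    _ ≤ sum fun k : K => #(𝒫 Iic k) := mk_iUnion_le_sum_mk
    _ = sum fun k : K => 2 ^ #(Iic k) := by simp only [mk_powerset]

theorem mk_boundedSupport_le [WellFoundedLT K] {lam : Cardinal.{u}} (hlam : ℵ₀ ≤ lam)
    (hK : ord #K = typeLT K) (hKinf : ℵ₀ ≤ #K) (hKlam : #K ≤ lam)
    (hpow : ∀ c < #K, 2 ^ c ≤ lam) : #(boundedSupport K) ≤ lam :=
  calc #(boundedSupport K) ≤ sum fun k : K => 2 ^ #(Iic k) := mk_boundedSupport_le_sum
    _ ≤ sum fun _ : K => lam := sum_le_sum _ _ fun k => hpow _ (mk_Iic_lt k hK hKinf)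
    _ = #K * lam := by simp
    _ ≤ lam := (mul_le_mul_left hKlam lam).trans (mul_eq_self hlam).le

variable [WellFoundedLT K]

theorem exists_mem_boundedSupport_btwn {g g' : Lex (K → Bool)} (h : g < g') :
    ∃ f ∈ boundedSupport K, g < f ∧ f ≤ g' := by
  obtain ⟨i, hagree, hi⟩ := h
  refine ⟨toLex fun k => if k ≤ i then g' k else false, ⟨i, fun k hk => ?_⟩,
    ⟨i, fun k hk => ?_, by simpa using hi⟩, not_lt.1 fun ⟨j, _, hj⟩ => ?_⟩
  · by_contra hki
    simp [hki] at hk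
  · simp [hk.le, hagree k hk]
  · by_cases hji : j ≤ i <;> simp [hji, Bool.lt_iff] at hj

theorem mk_lex_le_mk_setOf_isLowerSet_boundedSupport_lex (E : Type u) [Preorder E] [Nonempty E] :
    #(Lex (K → Bool)) ≤ #{s : Set (boundedSupport K ×ₗ E) | IsLowerSet s} := by
  refine mk_le_mk_setOf_isLowerSet_of_monotone
    (f := fun m => ((ofLex m).1 : Lex (K → Bool)))
    ((Subtype.mono_coe _).comp Prod.Lex.monotone_fst_ofLex) fun g g' h => ?_
  obtain ⟨f, hf, hgf, hfg⟩ := exists_mem_boundedSupport_btwn h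
  exact ⟨toLex (⟨f, hf⟩, Classical.arbitrary E), hgf, hfg⟩

end BoundedSupport

theorem Cardinal.exists_least_lt_two_power {lam : Cardinal.{u}} (hlam : ℵ₀ ≤ lam) :
    ∃ κ : Cardinal.{u}, ℵ₀ ≤ κ ∧ κ ≤ lam ∧ lam < 2 ^ κ ∧ ∀ c < κ, 2 ^ c ≤ lam := by
  let S : Set Cardinal.{u} := {c | lam < 2 ^ c}
  have hlt : lam < 2 ^ sInf S := csInf_mem (s := S) ⟨lam, cantor lam⟩
  refine ⟨sInf S, not_lt.1 fun hfin => ?_, csInf_le' (cantor lam), hlt,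
    fun c hc => not_lt.1 (notMem_of_lt_csInf' (s := S) hc)⟩
  exact (hlt.trans (power_lt_aleph0 (natCast_lt_aleph0 (n := 2)) hfin)).not_ge hlam

/-- For every infinite cardinal `λ` there is a dense linear order without endpoints of
cardinality `λ` with strictly more than `λ` cuts (downward-closed subsets). -/
theorem exists_dense_order_with_many_cuts (lam : Cardinal.{u}) (hlam : Cardinal.aleph0 ≤ lam) :
    ∃ (L : Type u) (_ : LinearOrder L),
      Cardinal.mk L = lam ∧ DenselyOrdered L ∧ NoMaxOrder L ∧ NoMinOrder L ∧
      lam < Cardinal.mk {S : Set L | ∀ x y : L, y ∈ S → x ≤ y → x ∈ S} := by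
  obtain ⟨κ, hκ, hκlam, hlt, hmin⟩ := exists_least_lt_two_power hlam
  let K := κ.ord.ToType
  let A := lam.ord.ToType
  have hK : #K = κ := mk_ord_toType κ
  have hA : #A = lam := mk_ord_toType lam
  have : Nonempty K := (infinite_iff.2 (hK ▸ hκ)).nonempty
  have : Nonempty A := (infinite_iff.2 (hA ▸ hlam)).nonempty
  have hD : #(boundedSupport K) ≤ lam := mk_boundedSupport_le hlam
    (by rw [hK]; exact (Ordinal.type_toType _).symm) (hK ▸ hκ) (hK ▸ hκlam) (hK ▸ hmin)
  refine ⟨boundedSupport K ×ₗ (A ×ₗ ℚ), inferInstance, ?_, inferInstance, inferInstance,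
    inferInstance, ?_⟩
  · change #(boundedSupport K × (A × ℚ)) = lam
    simp only [mk_prod, Cardinal.lift_id, Cardinal.mkRat, lift_aleph0, lift_uzero, hA]
    rw [mul_eq_left hlam hlam aleph0_ne_zero,
      mul_eq_right hlam hD (mk_ne_zero_iff.2 boundedSupport_nonempty.to_subtype)]
  · calc lam < 2 ^ κ := hlt
      _ = #(K → Bool) := by simp [hK]
      _ ≤ #{s : Set (boundedSupport K ×ₗ (A ×ₗ ℚ)) | IsLowerSet s} :=
        mk_lex_le_mk_setOf_isLowerSet_boundedSupport_lex _
      _ = _ := mk_congr <| Equiv.subtypeEquivRight fun s =>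
        ⟨fun h x y hy hxy => h hxy hy, fun h a b hba ha => h b a ha hba⟩
end
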